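/- Let S be a best choice recoloring of G and let v be a vertex of G. In the restricted sequence S_{|N⁺[v]}, no two consecutive steps both recolor v; moreover, there is at most one index i such that steps i and i+2 of S_{|N⁺[v]} recolor v while step i+1 recolors a vertex of N⁺(v), and if such an index exists then step i+2 is the last step of S_{|N⁺[v]}. -/

import Mathlib

/-!
Framework for the Best Choice Recoloring Algorithm on a chordal graph with
clique number at most `3`, with `k = 5` colors.

A recoloring sequence is a list of steps, each step `(v, c)` recoloring the
vertex `v` with the color `c`.
-/

variable {V : Type*} [DecidableEq V]

/-- `σ` is a proper coloring of `G`. -/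
def IsProperColoring (G : SimpleGraph V) (σ : V → Fin 5) : Prop :=
  ∀ ⦃x y⦄, G.Adj x y → σ x ≠ σ y

/-- Apply a list of recoloring steps to a coloring. -/
def applySteps (α : V → Fin 5) (S : List (V × Fin 5)) : V → Fin 5 :=
  S.foldl (fun σ s => Function.update σ s.1 s.2) α

/-- The number of steps of `S` recoloring the vertex `v`, i.e. `|S_{|v}|`. -/
def recolCount (S : List (V × Fin 5)) (v : V) : ℕ :=
  (S.filter fun s => decide (s.1 = v)).length

/-- `S_{|X}`: the subsequence of the steps of `S` recoloring vertices of `X`. -/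
noncomputable def restrict (X : Set V) (S : List (V × Fin 5)) : List (V × Fin 5) :=
  S.filter fun s => @decide (s.1 ∈ X) (Classical.propDecidable _)

/-- The position, inside the restricted sequence `S_{|X}`, corresponding to the step
of index `i` of `S` (when that step recolors a vertex of `X`). -/
noncomputable def posIn (X : Set V) (S : List (V × Fin 5)) (i : ℕ) : ℕ :=
  (restrict X (S.take i)).length

/-- The step of index `i` (0-based) of the sequence `S` recolors the vertex `x`. -/
def recolorsAt (S : List (V × Fin 5)) (i : ℕ) (x : V) : Prop :=
  ∃ c : Fin 5, S[i]? = some (x, c)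

/-- A perfect elimination ordering `[v₁, …, vₙ]` witnessing chordality with clique
number at most `3`: each vertex has at most two neighbors appearing later in the
list, and when it has two such neighbors they are adjacent. -/
def IsPEOList (G : SimpleGraph V) : List V → Prop
  | [] => True
  | v :: vs =>
      (¬ ∃ w₁ ∈ vs, ∃ w₂ ∈ vs, ∃ w₃ ∈ vs,
          G.Adj v w₁ ∧ G.Adj v w₂ ∧ G.Adj v w₃ ∧ w₁ ≠ w₂ ∧ w₁ ≠ w₃ ∧ w₂ ≠ w₃) ∧
      (∀ w₁ ∈ vs, ∀ w₂ ∈ vs, G.Adj v w₁ → G.Adj v w₂ → w₁ ≠ w₂ → G.Adj w₁ w₂) ∧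
      IsPEOList G vs

/-- `N⁺(x)`: the out-neighborhood of `x`, i.e. its neighbors appearing later in the
perfect elimination ordering `order`. -/
def NPlus (G : SimpleGraph V) (order : List V) (x : V) : Set V :=
  {y | G.Adj x y ∧ order.idxOf x < order.idxOf y}

/-- `N⁺[x] = N⁺(x) ∪ {x}`: the inclusive out-neighborhood of `x`. -/
def NPlusC (G : SimpleGraph V) (order : List V) (x : V) : Set V :=
  insert x (NPlus G order x)

/-- `c` is a valid color for `u` in the current coloring `σ`: it differs from the
current colors of `u` and of its neighbors among the active vertices `A`. -/
def ValidCol (G : SimpleGraph V) (A : List V) (u : V) (σ : V → Fin 5) (c : Fin 5) : Prop :=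
  c ≠ σ u ∧ ∀ w ∈ A, G.Adj u w → c ≠ σ w

/-- The list of colors assigned to (active) neighbors of `u` by the steps of `L`. -/
noncomputable def nbrColors (G : SimpleGraph V) (A : List V) (u : V)
    (L : List (V × Fin 5)) : List (Fin 5) :=
  (L.filter fun s => @decide (G.Adj u s.1 ∧ s.1 ∈ A) (Classical.propDecidable _)).map
    Prod.snd

/-- `c` is a best choice color for `u` (with target color `bu`), given the current
coloring `σ` and the list `future` of the remaining steps (the current one included):
`c` is valid for `u`, and it is `bu` if `bu` does not appear among the colors assigned
to neighbors of `u` in `future`; otherwise it avoids those colors if some valid color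
does; otherwise it is a valid color whose first occurrence among those colors is
latest. -/
def IsBestChoice (G : SimpleGraph V) (A : List V) (u : V) (bu : Fin 5)
    (σ : V → Fin 5) (future : List (V × Fin 5)) (c : Fin 5) : Prop :=
  ValidCol G A u σ c ∧
    (bu ∉ nbrColors G A u future → c = bu) ∧
    (bu ∈ nbrColors G A u future →
      ((∃ c', ValidCol G A u σ c' ∧ c' ∉ nbrColors G A u future) →
          c ∉ nbrColors G A u future) ∧
      ((∀ c', ValidCol G A u σ c' → c' ∈ nbrColors G A u future) →
          ∀ c', ValidCol G A u σ c' →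
            (nbrColors G A u future).idxOf c' ≤ (nbrColors G A u future).idxOf c))

/-- `LBC G A u bu σ S' S`: the sequence `S` is obtained from the sequence `S'`
(a recoloring sequence on the active vertices `A`, starting from the coloring `σ`)
by the Local Best Choice for the vertex `u` with target color `bu`: just before each
step of `S'` recoloring a neighbor of `u` with the current color of `u`, a step
recoloring `u` with a best choice color is inserted, and at the very end `u` is
recolored to `bu` if needed. -/
inductive LBC (G : SimpleGraph V) (A : List V) (u : V) (bu : Fin 5) :
    (V → Fin 5) → List (V × Fin 5) → List (V × Fin 5) → Prop
  | done {σ : V → Fin 5} (h : σ u = bu) : LBC G A u bu σ [] []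
  | final {σ : V → Fin 5} (h : σ u ≠ bu) : LBC G A u bu σ [] [(u, bu)]
  | skip {σ : V → Fin 5} {w : V} {c : Fin 5} {rest S : List (V × Fin 5)}
      (h : ¬(G.Adj u w ∧ w ∈ A ∧ c = σ u))
      (ih : LBC G A u bu (Function.update σ w c) rest S) :
      LBC G A u bu σ ((w, c) :: rest) ((w, c) :: S)
  | insert {σ : V → Fin 5} {w : V} {c : Fin 5} {rest S : List (V × Fin 5)} {c' : Fin 5}
      (h : G.Adj u w ∧ w ∈ A ∧ c = σ u)
      (hbc : IsBestChoice G A u bu σ ((w, c) :: rest) c')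
      (ih : LBC G A u bu (Function.update (Function.update σ u c') w c) rest S) :
      LBC G A u bu σ ((w, c) :: rest) ((u, c') :: (w, c) :: S)

/-- `BCR G α β order S`: `S` is a best choice recoloring of (the subgraph of `G`
induced by the vertices of) `order` from `α` to `β`, obtained by applying the Local
Best Choice successively to the vertices of `order` from the last one to the first
one. -/
inductive BCR (G : SimpleGraph V) (α β : V → Fin 5) : List V → List (V × Fin 5) → Prop
  | nil : BCR G α β [] []
  | cons {v : V} {vs : List V} {S' S : List (V × Fin 5)}
      (hS' : BCR G α β vs S') (h : LBC G vs v (β v) α S' S) :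
      BCR G α β (v :: vs) S

/-- The step of (0-based) index `p` of the restricted sequence `R = S_{|N⁺[v]}` is
saved for `v`: it recolors a vertex of `N⁺(v)` and either `v` is recolored at no step
up to and including it, or `v` is recolored at no step from it on, or neither of the
two steps preceding it in `R` recolors `v`. -/
def SavedForR (G : SimpleGraph V) (order : List V) (v : V)
    (R : List (V × Fin 5)) (p : ℕ) : Prop :=
  (∃ w ∈ NPlus G order v, recolorsAt R p w) ∧
    ((∀ j ≤ p, ¬ recolorsAt R j v) ∨
     (∀ j, p ≤ j → ¬ recolorsAt R j v) ∨
     (∀ q, p - 2 ≤ q → q < p → ¬ recolorsAt R q v))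

/-- The step of index `i` of `S` is saved for the vertex `v`. -/
def SavedFor (G : SimpleGraph V) (order : List V) (S : List (V × Fin 5)) (v : V)
    (i : ℕ) : Prop :=
  (∃ w ∈ NPlus G order v, recolorsAt S i w) ∧
    SavedForR G order v (restrict (NPlusC G order v) S) (posIn (NPlusC G order v) S i)


/-!
Only the Local Best Choice for `v` itself inserts steps recoloring `v`, and the Local Best
Choices for the vertices before `v` in the ordering do not touch `S_{|N⁺[v]}` at all. Every
step it inserts immediately precedes a step recoloring a later neighbour of `v`, so no two
consecutive steps of `S_{|N⁺[v]}` recolor `v`. Suppose a pattern `v, w, v` is followed by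
a further step. Then the second `v`-step is not the final one, so it is inserted because the
next step on a neighbour of `v` uses the color `c'` chosen at the first `v`-step; hence the
list of future neighbour colors at the first `v`-step starts with `σ v, c'`. As `v` has at
most two later neighbours and there are five colors, some valid color other than `c'` does
not occur at index `0` or `1` of that list, so `c'` was not a best choice.
-/

section Sequences

omit [DecidableEq V]

theorem restrict_cons_of_mem {X : Set V} {x : V} {c : Fin 5} (S : List (V × Fin 5))
    (h : x ∈ X) : restrict X ((x, c) :: S) = (x, c) :: restrict X S := by
  simp [restrict, h]

theorem restrict_cons_of_notMem {X : Set V} {x : V} {c : Fin 5} (S : List (V × Fin 5))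
    (h : x ∉ X) : restrict X ((x, c) :: S) = restrict X S := by
  simp [restrict, h]

theorem nbrColors_cons_of_adj {G : SimpleGraph V} {A : List V} {u : V} {p : V × Fin 5}
    (L : List (V × Fin 5)) (h : G.Adj u p.1 ∧ p.1 ∈ A) :
    nbrColors G A u (p :: L) = p.2 :: nbrColors G A u L := by
  simp [nbrColors, h]

theorem nbrColors_cons_of_not_adj {G : SimpleGraph V} {A : List V} {u : V} {p : V × Fin 5}
    (L : List (V × Fin 5)) (h : ¬(G.Adj u p.1 ∧ p.1 ∈ A)) :
    nbrColors G A u (p :: L) = nbrColors G A u L := by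
  simp [nbrColors, h]

@[simp]
theorem not_recolorsAt_nil (i : ℕ) (x : V) : ¬ recolorsAt ([] : List (V × Fin 5)) i x := by
  simp [recolorsAt]

@[simp]
theorem recolorsAt_cons_zero (p : V × Fin 5) (T : List (V × Fin 5)) (x : V) :
    recolorsAt (p :: T) 0 x ↔ p.1 = x := by
  simp [recolorsAt, Prod.ext_iff, eq_comm]

@[simp]
theorem recolorsAt_cons_succ (p : V × Fin 5) (T : List (V × Fin 5)) (i : ℕ) (x : V) :
    recolorsAt (p :: T) (i + 1) x ↔ recolorsAt T i x := by
  simp [recolorsAt]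

/-- The shape of `S_{|N⁺[v]}`: each `v`-step except a final one precedes a step on another
vertex, and `v, w, v` occurs only at the end. -/
inductive Spaced (v : V) : List (V × Fin 5) → Prop
  | nil : Spaced v []
  | last (c : Fin 5) : Spaced v [(v, c)]
  | skip {w : V} {c : Fin 5} {T : List (V × Fin 5)} (hw : w ≠ v) (h : Spaced v T) :
      Spaced v ((w, c) :: T)
  | pair {c' : Fin 5} {w : V} {c : Fin 5} {T : List (V × Fin 5)} (hw : w ≠ v) (h : Spaced v T)
      (hT : ∀ x T₂, T = (v, x) :: T₂ → T₂ = []) : Spaced v ((v, c') :: (w, c) :: T)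

theorem Spaced.not_recolorsAt_succ {v : V} {T : List (V × Fin 5)} (h : Spaced v T) :
    ∀ i, ¬ (recolorsAt T i v ∧ recolorsAt T (i + 1) v) := by
  induction h with
  | nil => simp
  | last c => rintro (_ | i) <;> simp
  | skip hw _ ih => rintro (_ | i) <;> simp [hw, ih]
  | pair hw _ _ ih => rintro (_ | _ | i) <;> simp [hw, ih]

theorem Spaced.length_eq_of_recolorsAt_add_two {v : V} {T : List (V × Fin 5)}
    (h : Spaced v T) : ∀ i, recolorsAt T i v → recolorsAt T (i + 2) v → i + 3 = T.length := by
  induction h with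
  | nil => simp
  | last c => simp
  | skip hw _ ih =>
      rintro (_ | i) h₁ h₂
      · simp [hw] at h₁
      · simpa using ih i (by simpa using h₁) (by simpa using h₂)
  | @pair c' w c T hw _ hT ih =>
      rintro (_ | _ | i) h₁ h₂
      · rcases T with _ | ⟨⟨y, x⟩, T₂⟩
        · simp at h₂
        · obtain rfl : y = v := by simpa using h₂
          simp [hT x T₂ rfl]
      · simp [hw] at h₁
      · simpa using ih i (by simpa using h₁) (by simpa using h₂)

theorem IsPEOList.of_append {G : SimpleGraph V} :
    ∀ (pre : List V) {M : List V}, IsPEOList G (pre ++ M) → IsPEOList G M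
  | [], _, h => h
  | _ :: pre, _, h => IsPEOList.of_append pre h.2.2

theorem IsPEOList.exists_cover_adj {G : SimpleGraph V} {v : V} {vs : List V}
    (h : IsPEOList G (v :: vs)) :
    ∃ w₁ w₂ : V, ∀ w ∈ vs, G.Adj v w → w = w₁ ∨ w = w₂ := by
  by_contra! hcon
  obtain ⟨w₁, hw₁, ha₁, -⟩ := hcon v v
  obtain ⟨w₂, hw₂, ha₂, h₂₁, -⟩ := hcon w₁ w₁
  obtain ⟨w₃, hw₃, ha₃, h₃₁, h₃₂⟩ := hcon w₁ w₂
  exact h.1 ⟨w₁, hw₁, w₂, hw₂, w₃, hw₃, ha₁, ha₂, ha₃, h₂₁.symm, h₃₁.symm, h₃₂.symm⟩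

end Sequences

theorem exists_ne_four_of_four_lt_card {α : Type*} [Fintype α] (h : 4 < Fintype.card α)
    (a b c d : α) : ∃ e, e ≠ a ∧ e ≠ b ∧ e ≠ c ∧ e ≠ d := by
  classical
  obtain ⟨e, -, he⟩ := Finset.exists_mem_notMem_of_card_lt_card
    (s := {a, b, c, d}) (t := Finset.univ) (Finset.card_le_four.trans_lt h)
  exact ⟨e, by simpa using he⟩

section Recoloring

variable {G : SimpleGraph V} {A : List V} {u : V} {bu : Fin 5} {σ : V → Fin 5}
  {S' S : List (V × Fin 5)} {X : Set V}

theorem LBC.fst_mem (h : LBC G A u bu σ S' S) (hS' : ∀ p ∈ S', p.1 ∈ A) :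
    ∀ p ∈ S, p.1 = u ∨ p.1 ∈ A := by
  induction h with
  | done => simp
  | final => simp
  | skip _ _ ih =>
      simp only [List.forall_mem_cons] at hS' ⊢
      exact ⟨Or.inr hS'.1, ih hS'.2⟩
  | insert _ _ _ ih =>
      simp only [List.forall_mem_cons] at hS' ⊢
      exact ⟨by simp, Or.inr hS'.1, ih hS'.2⟩

theorem BCR.fst_mem {α β : V → Fin 5} {L : List V} (h : BCR G α β L S) :
    ∀ p ∈ S, p.1 ∈ L := by
  induction h with
  | nil => simp
  | cons _ hl ih =>
      intro p hp
      rcases hl.fst_mem ih p hp with h | h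
      · exact h ▸ List.mem_cons_self
      · exact List.mem_cons_of_mem _ h

theorem LBC.restrict_eq_of_notMem (hu : u ∉ X) (h : LBC G A u bu σ S' S) :
    restrict X S = restrict X S' := by
  induction h with
  | done => rfl
  | final => rw [restrict_cons_of_notMem _ hu]
  | @skip _ w _ _ _ _ _ ih =>
      by_cases hw : w ∈ X
      · rw [restrict_cons_of_mem _ hw, restrict_cons_of_mem _ hw, ih]
      · rw [restrict_cons_of_notMem _ hw, restrict_cons_of_notMem _ hw, ih]
  | @insert _ w _ _ _ _ _ _ _ ih =>
      rw [restrict_cons_of_notMem _ hu]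
      by_cases hw : w ∈ X
      · rw [restrict_cons_of_mem _ hw, restrict_cons_of_mem _ hw, ih]
      · rw [restrict_cons_of_notMem _ hw, restrict_cons_of_notMem _ hw, ih]

theorem BCR.exists_restrict_eq_of_append {α β : V → Fin 5} :
    ∀ (pre : List V) {M : List V} {S : List (V × Fin 5)}, BCR G α β (pre ++ M) S →
      (∀ u ∈ pre, u ∉ X) → ∃ S₀, BCR G α β M S₀ ∧ restrict X S = restrict X S₀
  | [], _, S, h, _ => ⟨S, h, rfl⟩
  | u :: pre, _, _, .cons hS' hl, hpre => by
      obtain ⟨S₀, h₀, he⟩ := BCR.exists_restrict_eq_of_append pre hS'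
        fun z hz => hpre z (List.mem_cons_of_mem _ hz)
      exact ⟨S₀, h₀, (hl.restrict_eq_of_notMem (hpre u List.mem_cons_self)).trans he⟩

omit [DecidableEq V] in
/-- Some valid color avoids `σ u`, `c'` and the colors of the two neighbours; it occurs in the
future neighbour colors later than `c'` or not at all, so `c'` is not a best choice. -/
theorem IsBestChoice.nbrColors_ne_cons_cons
    (hcover : ∃ w₁ w₂ : V, ∀ w ∈ A, G.Adj u w → w = w₁ ∨ w = w₂)
    {future : List (V × Fin 5)} {c' : Fin 5} (hbc : IsBestChoice G A u bu σ future c')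
    (tail : List (Fin 5)) : nbrColors G A u future ≠ σ u :: c' :: tail := by
  intro hF
  have hc'u : c' ≠ σ u := hbc.1.1
  have hc'mem : c' ∈ nbrColors G A u future := by simp [hF]
  have hbu : bu ∈ nbrColors G A u future := by
    by_contra hb
    exact hb (hbc.2.1 hb ▸ hc'mem)
  obtain ⟨havoid, hlatest⟩ := hbc.2.2 hbu
  by_cases hex : ∃ c₀, ValidCol G A u σ c₀ ∧ c₀ ∉ nbrColors G A u future
  · exact havoid hex hc'mem
  push Not at hex
  obtain ⟨w₁, w₂, hcover⟩ := hcover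
  obtain ⟨c'', h₀, h₁, h₂, h₃⟩ :=
    exists_ne_four_of_four_lt_card (by simp) (σ u) (σ w₁) (σ w₂) c'
  have hvalid : ValidCol G A u σ c'' :=
    ⟨h₀, fun w hw hadj => by rcases hcover w hw hadj with rfl | rfl <;> assumption⟩
  have hle := hlatest hex c'' hvalid
  rw [hF, List.idxOf_cons_ne _ hc'u.symm, List.idxOf_cons_self, List.idxOf_cons_ne _ h₀.symm,
    List.idxOf_cons_ne _ h₃.symm] at hle
  omega

theorem LBC.exists_nbrColors_eq_cons (hu : u ∉ A) (hXA : ∀ w ∈ A, G.Adj u w → w ∈ X)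
    (h : LBC G A u bu σ S' S) (hS' : ∀ p ∈ S', p.1 ∈ A) {x : Fin 5} {T : List (V × Fin 5)}
    (hr : restrict X S = (u, x) :: T) (hT : T ≠ []) :
    ∃ tail, nbrColors G A u S' = σ u :: tail := by
  induction h with
  | done => simp [restrict] at hr
  | final =>
      by_cases huX : u ∈ X
      · rw [restrict_cons_of_mem _ huX] at hr
        exact absurd (List.cons_eq_cons.1 hr).2.symm hT
      · rw [restrict_cons_of_notMem _ huX] at hr
        simp [restrict] at hr
  | @skip _ w _ _ _ _ _ ih =>
      simp only [List.forall_mem_cons] at hS'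
      have hwu : w ≠ u := fun e => hu (e ▸ hS'.1)
      by_cases hwX : w ∈ X
      · rw [restrict_cons_of_mem _ hwX] at hr
        exact absurd (congrArg Prod.fst (List.cons_eq_cons.1 hr).1) hwu
      · rw [restrict_cons_of_notMem _ hwX] at hr
        obtain ⟨tail, htail⟩ := ih hS'.2 hr
        rw [Function.update_of_ne hwu.symm] at htail
        refine ⟨tail, ?_⟩
        rw [nbrColors_cons_of_not_adj _ fun hc => hwX (hXA w hc.2 hc.1), htail]
  | insert hcond =>
      obtain ⟨hadj, hwA, rfl⟩ := hcond
      exact ⟨_, nbrColors_cons_of_adj _ ⟨hadj, hwA⟩⟩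

theorem LBC.spaced_restrict (hu : u ∉ A) (huX : u ∈ X) (hXA : ∀ w ∈ A, G.Adj u w → w ∈ X)
    (hcover : ∃ w₁ w₂ : V, ∀ w ∈ A, G.Adj u w → w = w₁ ∨ w = w₂)
    (h : LBC G A u bu σ S' S) (hS' : ∀ p ∈ S', p.1 ∈ A) : Spaced u (restrict X S) := by
  induction h with
  | done => exact Spaced.nil
  | final => exact restrict_cons_of_mem _ huX ▸ Spaced.last bu
  | @skip _ w _ _ _ _ _ ih =>
      simp only [List.forall_mem_cons] at hS'
      have hwu : w ≠ u := fun e => hu (e ▸ hS'.1)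
      by_cases hwX : w ∈ X
      · rw [restrict_cons_of_mem _ hwX]
        exact Spaced.skip hwu (ih hS'.2)
      · rw [restrict_cons_of_notMem _ hwX]
        exact ih hS'.2
  | @insert _ w _ _ _ _ hcond hbc hrest ih =>
      simp only [List.forall_mem_cons] at hS'
      obtain ⟨hadj, hwA, hc⟩ := hcond
      have hwu : w ≠ u := fun e => hu (e ▸ hwA)
      rw [restrict_cons_of_mem _ huX, restrict_cons_of_mem _ (hXA w hwA hadj)]
      refine Spaced.pair hwu (ih hS'.2) fun x T hT => ?_
      by_contra hTne
      obtain ⟨tail, htail⟩ := hrest.exists_nbrColors_eq_cons hu hXA hS'.2 hT hTne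
      rw [Function.update_of_ne hwu.symm, Function.update_self] at htail
      -- the step `(w, c)` has `c = σ u`, and the next neighbour step has color `c'`
      refine hbc.nbrColors_ne_cons_cons hcover tail ?_
      rw [nbrColors_cons_of_adj _ ⟨hadj, hwA⟩, htail, hc]

end Recoloring

section Ordering

variable {G : SimpleGraph V} {pre post : List V} {v : V}

theorem notMem_NPlusC_of_mem_prefix (hnd : (pre ++ v :: post).Nodup) {u : V} (hu : u ∈ pre) :
    u ∉ NPlusC G (pre ++ v :: post) v := by
  have hvpre : v ∉ pre := fun hv => (List.nodup_append'.1 hnd).2.2 hv List.mem_cons_self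
  rintro (rfl | ⟨-, hlt⟩)
  · exact hvpre hu
  · rw [List.idxOf_append_of_mem hu, List.idxOf_append_of_notMem hvpre,
      List.idxOf_cons_self] at hlt
    have := List.idxOf_lt_length_iff.2 hu
    omega

theorem mem_NPlusC_of_adj (hnd : (pre ++ v :: post).Nodup) {w : V} (hw : w ∈ post)
    (hadj : G.Adj v w) : w ∈ NPlusC G (pre ++ v :: post) v := by
  obtain ⟨-, hndr, hdisj⟩ := List.nodup_append'.1 hnd
  have hvpre : v ∉ pre := fun hv => hdisj hv List.mem_cons_self
  have hwpre : w ∉ pre := fun hw' => hdisj hw' (List.mem_cons_of_mem _ hw)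
  have hwv : w ≠ v := fun e => (List.nodup_cons.1 hndr).1 (e ▸ hw)
  refine Or.inr ⟨hadj, ?_⟩
  rw [List.idxOf_append_of_notMem hvpre, List.idxOf_append_of_notMem hwpre,
    List.idxOf_cons_self, List.idxOf_cons_ne _ hwv.symm]
  omega

end Ordering

theorem statement_3_general {V : Type*} [DecidableEq V] (G : SimpleGraph V)
    (order : List V) (hnd : order.Nodup) (hall : ∀ x : V, x ∈ order)
    (hpeo : IsPEOList G order)
    (α β : V → Fin 5)
    (S : List (V × Fin 5)) (hS : BCR G α β order S)
    (v : V) :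
    (∀ i, ¬(recolorsAt (restrict (NPlusC G order v) S) i v ∧
            recolorsAt (restrict (NPlusC G order v) S) (i + 1) v)) ∧
    (∀ i, recolorsAt (restrict (NPlusC G order v) S) i v →
          (∃ w ∈ NPlus G order v, recolorsAt (restrict (NPlusC G order v) S) (i + 1) w) →
          recolorsAt (restrict (NPlusC G order v) S) (i + 2) v →
          i + 3 = (restrict (NPlusC G order v) S).length) := by
  obtain ⟨pre, post, rfl⟩ := List.append_of_mem (hall v)
  have hvpost : v ∉ post := (List.nodup_cons.1 (List.nodup_append'.1 hnd).2.1).1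
  obtain ⟨S₀, hS₀, hres⟩ := hS.exists_restrict_eq_of_append pre
    fun _ hu => notMem_NPlusC_of_mem_prefix hnd hu
  obtain _ | ⟨hS', hl⟩ := hS₀
  have hspaced := hl.spaced_restrict hvpost (Set.mem_insert _ _)
    (fun _ hw hadj => mem_NPlusC_of_adj hnd hw hadj)
    (IsPEOList.of_append pre hpeo).exists_cover_adj hS'.fst_mem
  rw [hres]
  exact ⟨hspaced.not_recolorsAt_succ,
    fun i h₁ _ h₂ => hspaced.length_eq_of_recolorsAt_add_two i h₁ h₂⟩

/-- Let `S` be a best choice recoloring of `G` and let `v` be a vertex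
of `G`. In the restricted sequence `R = S_{|N⁺[v]}`, no two consecutive steps both
recolor `v`; moreover, there is at most one index `i` such that steps `i` and `i+2` of
`R` recolor `v` while step `i+1` recolors a vertex of `N⁺(v)`, and if such an index
exists then step `i+2` is the last step of `R` (here this is expressed, in 0-based
indexing, by `i + 3 = R.length`, which in particular forces uniqueness of such `i`). -/
theorem statement_3 {V : Type*} [Fintype V] [DecidableEq V] (G : SimpleGraph V)
    (order : List V) (hnd : order.Nodup) (hall : ∀ x : V, x ∈ order)
    (hpeo : IsPEOList G order)
    (α β : V → Fin 5) (hα : IsProperColoring G α) (hβ : IsProperColoring G β)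
    (S : List (V × Fin 5)) (hS : BCR G α β order S)
    (v : V) :
    (∀ i, ¬(recolorsAt (restrict (NPlusC G order v) S) i v ∧
            recolorsAt (restrict (NPlusC G order v) S) (i + 1) v)) ∧
    (∀ i, recolorsAt (restrict (NPlusC G order v) S) i v →
          (∃ w ∈ NPlus G order v, recolorsAt (restrict (NPlusC G order v) S) (i + 1) w) →
          recolorsAt (restrict (NPlusC G order v) S) (i + 2) v →
          i + 3 = (restrict (NPlusC G order v) S).length) :=
  statement_3_general G order hnd hall hpeo α β S hS v
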